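/- arXiv:1504.00235 — 2 statements merged into one kernel-verified Lean document; each statement's English description precedes it below -/
import Mathlib

section
/- For fixed a > -1 and every complex z, the scaled Laguerre polynomials converge: n^{-a} L_n^a(z/n) → ∑_{k=0}^∞ (-1)^k z^k / (k! Γ(a+k+1)) as n → ∞, and the convergence is uniform on every bounded subset of ℂ. -/
open Filter

/-- The generalized Laguerre polynomial `L_n^a`, extended to complex arguments. -/
noncomputable def genLaguerreC (n : ℕ) (a : ℝ) (z : ℂ) : ℂ :=
  ∑ k ∈ Finset.range (n + 1),
    (-1 : ℂ) ^ k *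
      ((Real.Gamma ((n : ℝ) + a + 1) /
        (Real.Gamma (a + (k : ℝ) + 1) * ((n - k).factorial : ℝ)) : ℝ) : ℂ) *
      z ^ k / ((k.factorial : ℝ) : ℂ)

/-- The entire function `φ_a(z) = ∑_{k=0}^∞ (-1)^k z^k / (k! Γ(a+k+1))`, equal to
`z^{-a/2} J_a(2√z)` for `z > 0`. -/
noncomputable def phiC (a : ℝ) (z : ℂ) : ℂ :=
  ∑' k : ℕ, (-1 : ℂ) ^ k * z ^ k / ((k.factorial : ℂ) * (Real.Gamma (a + (k : ℝ) + 1) : ℂ))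

/-!
Writing `w n k = Γ(n+a+1)/(n^a n!) · n(n-1)⋯(n-k+1)/n^k`, the rescaled polynomial
`n^{-a} L_n^a(z/n)` is exactly `∑ₖ w n k · (-1)^k z^k/(k! Γ(a+k+1))`, the series of `φ_a` with
its `k`-th term multiplied by `w n k` (which vanishes for `k > n`). Each weight tends to `1`, by
Wendel's limit `Γ(n+a+1) ~ n^a n!` and `n(n-1)⋯(n-k+1) ~ n^k`, and all of them lie in
`[0, Γ(n+a+1)/(n^a n!)]`, a bounded range for large `n`. On a bounded set the terms of the
series are dominated by a summable sequence, since `Γ` is bounded below on `(0, ∞)`, so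
Tannery's theorem gives convergence uniformly in `z`.
-/

open Topology Finset

theorem tendstoUniformlyOn_tsum_smul_of_tendsto_one {ι α β E : Type*} {l : Filter ι}
    [NormedAddCommGroup E] [NormedSpace ℝ E] [CompleteSpace E]
    {w : ι → β → ℝ} {f : β → α → E} {m : β → ℝ} {S : Set α} {M : ℝ}
    (hm : Summable m) (hf : ∀ k, ∀ z ∈ S, ‖f k z‖ ≤ m k)
    (hw : ∀ k, Tendsto (w · k) l (𝓝 1)) (hwM : ∀ᶠ n in l, ∀ k, |w n k| ≤ M) :
    TendstoUniformlyOn (fun n z => ∑' k, w n k • f k z) (fun z => ∑' k, f k z) l S := by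
  have hm' : Summable (|m ·|) := hm.abs
  have hfm : ∀ k, ∀ z ∈ S, ‖f k z‖ ≤ |m k| := fun k z hz => (hf k z hz).trans (le_abs_self _)
  have hwM' : ∀ᶠ n in l, ∀ k, |w n k| ≤ |M| := hwM.mono fun n hn k => (hn k).trans (le_abs_self M)
  have hw1 : ∀ᶠ n in l, ∀ k, |w n k - 1| ≤ |M| + 1 := hwM'.mono fun n hn k =>
    (abs_sub _ _).trans (by simpa using hn k)
  have herr : Tendsto (fun n => ∑' k, |w n k - 1| * |m k|) l (𝓝 0) := by
    have hlim : ∀ k, Tendsto (fun n => |w n k - 1| * |m k|) l (𝓝 0) := fun k => by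
      simpa using (((hw k).sub_const 1).abs).mul_const |m k|
    simpa using tendsto_tsum_of_dominated_convergence (hm'.mul_left (|M| + 1)) hlim <| by
      filter_upwards [hw1] with n hn k
      rw [Real.norm_eq_abs, abs_mul, abs_abs, abs_abs]
      exact mul_le_mul_of_nonneg_right (hn k) (abs_nonneg _)
  rw [Metric.tendstoUniformlyOn_iff]
  intro ε hε
  filter_upwards [herr.eventually_lt_const hε, hwM', hw1] with n hn hnM hn1 z hz
  have hbound : ∀ k, ‖f k z - w n k • f k z‖ ≤ |w n k - 1| * |m k| := fun k => by
    rw [show f k z - w n k • f k z = (1 - w n k) • f k z by rw [sub_smul, one_smul],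
      norm_smul, Real.norm_eq_abs, abs_sub_comm]
    exact mul_le_mul_of_nonneg_left (hfm k z hz) (abs_nonneg _)
  have hsum : Summable fun k => |w n k - 1| * |m k| :=
    (hm'.mul_left (|M| + 1)).of_nonneg_of_le (fun k => by positivity)
      fun k => mul_le_mul_of_nonneg_right (hn1 k) (abs_nonneg _)
  have hfz : Summable (f · z) := hm'.of_norm_bounded fun k => hfm k z hz
  have hwfz : Summable (fun k => w n k • f k z) := by
    refine (hm'.mul_left |M|).of_norm_bounded fun k => ?_
    rw [norm_smul, Real.norm_eq_abs]
    exact mul_le_mul (hnM k) (hfm k z hz) (norm_nonneg _) (abs_nonneg M)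
  rw [dist_eq_norm, ← hfz.tsum_sub hwfz]
  exact (tsum_of_norm_bounded hsum.hasSum hbound).trans_lt hn

namespace Real

theorem Gamma_add_nat_eq_mul_prod {s : ℝ} (hs : 0 < s) (m : ℕ) :
    Gamma (s + m) = Gamma s * ∏ j ∈ range m, (s + j) := by
  induction m with
  | zero => simp
  | succ m ih =>
    rw [Nat.cast_succ, ← add_assoc, Gamma_add_one (by positivity), prod_range_succ, ih]
    ring

theorem tendsto_Gamma_nat_add_div_rpow_mul_factorial {a : ℝ} (ha : -1 < a) :
    Tendsto (fun n : ℕ => Gamma (n + a + 1) / ((n : ℝ) ^ a * n.factorial)) atTop (𝓝 1) := by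
  have hs : 0 < a + 1 := by linarith
  have hGamma : Gamma (a + 1) ≠ 0 := (Gamma_pos_of_pos hs).ne'
  have hEuler : Tendsto (fun n => Gamma (a + 1) / GammaSeq (a + 1) n) atTop (𝓝 1) := by
    have := (tendsto_const_nhds (x := Gamma (a + 1))).div (GammaSeq_tendsto_Gamma (a + 1)) hGamma
    rwa [div_self hGamma] at this
  have hshift : Tendsto (fun n : ℕ => (n : ℝ) / (n + a + 1)) atTop (𝓝 1) := by
    simpa only [add_assoc] using tendsto_natCast_div_add_atTop (a + 1)
  refine (mul_one (1 : ℝ) ▸ hshift.mul hEuler).congr' ?_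
  filter_upwards [eventually_gt_atTop 0] with n hn
  have hn : (0 : ℝ) < n := Nat.cast_pos.mpr hn
  have hna : 0 < (n : ℝ) + a + 1 := by linarith
  have hprod :
      ∏ j ∈ range (n + 1), (a + 1 + j) = (n + a + 1) * Gamma (n + a + 1) / Gamma (a + 1) := by
    rw [eq_div_iff hGamma, mul_comm, ← Gamma_add_nat_eq_mul_prod hs, ← Gamma_add_one hna.ne']
    push_cast
    ring_nf
  rw [GammaSeq, hprod, rpow_add_one hn.ne']
  field_simp

end Real

noncomputable def phiTerm (a : ℝ) (k : ℕ) (z : ℂ) : ℂ :=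
  (-1 : ℂ) ^ k * z ^ k / ((k.factorial : ℂ) * (Real.Gamma (a + (k : ℝ) + 1) : ℂ))

theorem add_nat_add_one_pos {a : ℝ} (ha : -1 < a) (k : ℕ) : 0 < a + k + 1 := by
  linarith [(Nat.cast_nonneg k : (0 : ℝ) ≤ k)]

theorem phiC_eq_tsum (a : ℝ) (z : ℂ) : phiC a z = ∑' k, phiTerm a k z := rfl

theorem norm_phiTerm {a : ℝ} (ha : -1 < a) (k : ℕ) (z : ℂ) :
    ‖phiTerm a k z‖ = ‖z‖ ^ k / (k.factorial * Real.Gamma (a + k + 1)) := by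
  have hGamma : 0 < Real.Gamma (a + k + 1) := Real.Gamma_pos_of_pos (add_nat_add_one_pos ha k)
  simp [phiTerm, abs_of_pos hGamma]

theorem summable_pow_div_factorial_mul_Gamma {a : ℝ} (ha : -1 < a) (R : ℝ) :
    Summable fun k : ℕ => R ^ k / (k.factorial * Real.Gamma (a + k + 1)) := by
  obtain ⟨x₀, hx₀, hmin⟩ := Real.exists_isMinOn_Gamma_Ioi
  have hγ : 0 < Real.Gamma x₀ := Real.Gamma_pos_of_pos (by linarith [hx₀.1])
  refine ((Real.summable_pow_div_factorial |R|).div_const (Real.Gamma x₀)).of_norm_bounded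
    fun k => ?_
  have hGamma : Real.Gamma x₀ ≤ Real.Gamma (a + k + 1) :=
    hmin (add_nat_add_one_pos ha k)
  rw [Real.norm_eq_abs, abs_div, abs_pow, abs_mul, Nat.abs_cast, abs_of_pos (hγ.trans_le hGamma),
    div_div]
  gcongr

noncomputable def laguerreWeight (a : ℝ) (n k : ℕ) : ℝ :=
  Real.Gamma (n + a + 1) / ((n : ℝ) ^ a * n.factorial) * (n.descFactorial k / (n : ℝ) ^ k)

theorem rpow_neg_mul_genLaguerreC_div (n : ℕ) (a : ℝ) (z : ℂ) :
    (((n : ℝ) ^ (-a) : ℝ) : ℂ) * genLaguerreC n a (z / n) =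
      ∑' k, laguerreWeight a n k • phiTerm a k z := by
  have hvanish : ∀ k ∉ range (n + 1), laguerreWeight a n k • phiTerm a k z = 0 := fun k hk => by
    rw [mem_range, not_lt, Nat.succ_le_iff, ← Nat.descFactorial_eq_zero_iff_lt] at hk
    simp [laguerreWeight, hk]
  rw [tsum_eq_sum hvanish, genLaguerreC, mul_sum]
  refine sum_congr rfl fun k hk => ?_
  have hkn : k ≤ n := Nat.lt_succ_iff.mp (mem_range.mp hk)
  have hfac : (n.factorial : ℝ) = (n - k).factorial * n.descFactorial k := by
    exact_mod_cast (Nat.factorial_mul_descFactorial hkn).symm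
  simp only [laguerreWeight, phiTerm, Real.rpow_neg (Nat.cast_nonneg n), Complex.real_smul]
  have hdesc : (n.descFactorial k : ℂ) ≠ 0 := by
    exact_mod_cast (Nat.descFactorial_eq_zero_iff_lt.not.mpr (not_lt.mpr hkn))
  rw [hfac]
  push_cast
  rw [div_pow]
  field_simp

theorem abs_laguerreWeight_le {a : ℝ} (ha : -1 < a) (n k : ℕ) :
    |laguerreWeight a n k| ≤ Real.Gamma (n + a + 1) / ((n : ℝ) ^ a * n.factorial) := by
  have hGamma : 0 ≤ Real.Gamma (n + a + 1) / ((n : ℝ) ^ a * n.factorial) :=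
    div_nonneg (Real.Gamma_pos_of_pos (by linarith [add_nat_add_one_pos ha n])).le (by positivity)
  rw [laguerreWeight, abs_of_nonneg (by positivity)]
  refine mul_le_of_le_one_right hGamma (div_le_one_of_le₀ ?_ (by positivity))
  exact_mod_cast Nat.descFactorial_le_pow n k

theorem tendsto_laguerreWeight {a : ℝ} (ha : -1 < a) (k : ℕ) :
    Tendsto (laguerreWeight a · k) atTop (𝓝 1) := by
  have hdesc : Tendsto (fun n : ℕ => (n.descFactorial k : ℝ) / (n : ℝ) ^ k) atTop (𝓝 1) := by
    refine (Asymptotics.isEquivalent_iff_tendsto_one ?_).mp (isEquivalent_descFactorial k)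
    filter_upwards [eventually_gt_atTop 0] with n hn
    positivity
  have := (Real.tendsto_Gamma_nat_add_div_rpow_mul_factorial ha).mul hdesc
  rwa [mul_one] at this

/-- Mehler–Heine asymptotics: for fixed `a > -1`, `n^{-a} L_n^a(z/n) → φ_a(z)` as
`n → ∞`, uniformly on every bounded subset of `ℂ` (hence pointwise for every `z`). -/
theorem mehler_heine (a : ℝ) (ha : -1 < a) (S : Set ℂ) (hS : Bornology.IsBounded S) :
    TendstoUniformlyOn
      (fun (n : ℕ) (z : ℂ) => (((n : ℝ) ^ (-a) : ℝ) : ℂ) * genLaguerreC n a (z / (n : ℂ)))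
      (fun z => phiC a z) atTop S := by
  obtain ⟨C, hC⟩ := isBounded_iff_forall_norm_le.mp hS
  have hdominated : ∀ k, ∀ z ∈ S,
      ‖phiTerm a k z‖ ≤ C ^ k / (k.factorial * Real.Gamma (a + k + 1)) := fun k z hz => by
    have hGamma := Real.Gamma_pos_of_pos (add_nat_add_one_pos ha k)
    rw [norm_phiTerm ha]
    gcongr
    exact hC z hz
  have hweights : ∀ᶠ n in atTop, ∀ k, |laguerreWeight a n k| ≤ 2 := by
    filter_upwards [(Real.tendsto_Gamma_nat_add_div_rpow_mul_factorial ha).eventually_le_const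
      one_lt_two] with n hn k
    exact (abs_laguerreWeight_le ha n k).trans hn
  simpa only [rpow_neg_mul_genLaguerreC_div, phiC_eq_tsum] using
    tendstoUniformlyOn_tsum_smul_of_tendsto_one (summable_pow_div_factorial_mul_Gamma ha C)
      hdominated (tendsto_laguerreWeight ha) hweights
end

section
/- Let (X, ν) be a measure space with ν(X) < ∞, and let K, L : X × X → ℝ be bounded measurable kernels whose induced integral operators on L²(ν) are trace class with Fredholm determinants defined via the standard series det(I-K) = ∑_{m=0}^∞ ((-1)^m/m!) ∫ det(K(x_i,x_j))_{i,j≤m} dν^m. If ‖K‖_∞, ‖L‖_∞ ≤ M, then |det(I-K) - det(I-L)| ≤ c(M, ν(X)) · ‖K - L‖_∞ for a constant c(M, ν(X)) depending only on M and ν(X). -/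
/-!
Write `det(I-K) - det(I-L)` as the series of differences of the `m`-th terms. By Hadamard's
inequality an `m × m` determinant with entries bounded by `M` is at most `m^{m/2} M^m`, and since
the determinant is multilinear in the rows, two such determinants whose entries differ by at most
`δ` differ by at most `m · m^{m/2} M^{m-1} δ`. Integrating over `ν^m` and dividing by `m!` gives
`c = ∑ m · m^{m/2} M^{m-1} ν(X)^m / m!`, which is finite because `m^m ≤ e^m m!`.
-/

open MeasureTheory

/-- The Fredholm determinant of a kernel `K` on a measure space `(X, ν)`, defined via the
standard series `det(I-K) = ∑_{m=0}^∞ ((-1)^m/m!) ∫ det(K(x_i,x_j))_{i,j≤m} dν^m`. -/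
noncomputable def fredholmDet {X : Type*} [MeasurableSpace X] (ν : Measure X)
    (K : X → X → ℝ) : ℝ :=
  ∑' m : ℕ, ((-1 : ℝ) ^ m / (m.factorial : ℝ)) *
    ∫ x : Fin m → X, Matrix.det (Matrix.of fun i j => K (x i) (x j))
      ∂(Measure.pi fun _ => ν)

lemma EuclideanSpace.norm_le_sqrt_card_mul {𝕜 ι : Type*} [RCLike 𝕜] [Fintype ι]
    {v : EuclideanSpace 𝕜 ι} {M : ℝ} (h : ∀ j, ‖v j‖ ≤ M) : ‖v‖ ≤ √(Fintype.card ι) * M := by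
  rcases isEmpty_or_nonempty ι with hι | ⟨⟨j₀⟩⟩
  · simp [Subsingleton.elim v 0]
  have hM : 0 ≤ M := (norm_nonneg _).trans (h j₀)
  calc ‖v‖ = √(∑ j, ‖v j‖ ^ 2) := EuclideanSpace.norm_eq v
    _ ≤ √(∑ _j : ι, M ^ 2) := by gcongr with j; exact h j
    _ = √(Fintype.card ι) * M := by
      rw [Finset.sum_const, Finset.card_univ, nsmul_eq_mul, Real.sqrt_mul (Nat.cast_nonneg _),
        Real.sqrt_sq hM]

namespace Matrix

def euclideanRows {m n 𝕜 : Type*} (A : Matrix m n 𝕜) : m → EuclideanSpace 𝕜 n :=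
  fun i => WithLp.toLp 2 (A i)

variable {n : ℕ}

lemma det_eq_volumeForm_euclideanRows [Fact (Module.finrank ℝ (EuclideanSpace ℝ (Fin n)) = n)]
    (A : Matrix (Fin n) (Fin n) ℝ) :
    A.det = (EuclideanSpace.basisFun (Fin n) ℝ).toBasis.orientation.volumeForm A.euclideanRows := by
  rw [Orientation.volumeForm_robust _ _ rfl, Module.Basis.det_apply, ← det_transpose]
  rfl

lemma abs_det_le_prod_norm_euclideanRows (A : Matrix (Fin n) (Fin n) ℝ) :
    |A.det| ≤ ∏ i, ‖A.euclideanRows i‖ := by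
  have : Fact (Module.finrank ℝ (EuclideanSpace ℝ (Fin n)) = n) := ⟨finrank_euclideanSpace_fin⟩
  rw [det_eq_volumeForm_euclideanRows]
  exact Orientation.abs_volumeForm_apply_le _ _

lemma abs_det_sub_det_le_norm_euclideanRows (A B : Matrix (Fin n) (Fin n) ℝ) :
    |A.det - B.det| ≤ n * max ‖A.euclideanRows‖ ‖B.euclideanRows‖ ^ (n - 1) *
      ‖A.euclideanRows - B.euclideanRows‖ := by
  have : Fact (Module.finrank ℝ (EuclideanSpace ℝ (Fin n)) = n) := ⟨finrank_euclideanSpace_fin⟩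
  rw [det_eq_volumeForm_euclideanRows, det_eq_volumeForm_euclideanRows, ← Real.norm_eq_abs]
  set ω := (EuclideanSpace.basisFun (Fin n) ℝ).toBasis.orientation.volumeForm
  simpa using ω.norm_image_sub_le_of_bound zero_le_one
    (by simpa using Orientation.abs_volumeForm_apply_le _) _ _

lemma abs_det_le_of_abs_le {A : Matrix (Fin n) (Fin n) ℝ} {M : ℝ} (h : ∀ i j, |A i j| ≤ M) :
    |A.det| ≤ √n ^ n * M ^ n := by
  calc |A.det| ≤ ∏ i, ‖A.euclideanRows i‖ := abs_det_le_prod_norm_euclideanRows A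
    _ ≤ ∏ _i : Fin n, √n * M := by
      gcongr with i
      simpa using EuclideanSpace.norm_le_sqrt_card_mul (v := A.euclideanRows i) (h i)
    _ = √n ^ n * M ^ n := by simp [mul_pow]

lemma abs_det_sub_det_le_of_abs_le {A B : Matrix (Fin n) (Fin n) ℝ} {M δ : ℝ}
    (hA : ∀ i j, |A i j| ≤ M) (hB : ∀ i j, |B i j| ≤ M) (hAB : ∀ i j, |A i j - B i j| ≤ δ) :
    |A.det - B.det| ≤ n * √n ^ n * M ^ (n - 1) * δ := by
  rcases n with _ | k
  · simp
  have hM : 0 ≤ M := (abs_nonneg _).trans (hA 0 0)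
  have hδ : 0 ≤ δ := (abs_nonneg _).trans (hAB 0 0)
  have hrows {C : Matrix (Fin (k + 1)) (Fin (k + 1)) ℝ} {c : ℝ} (hc : 0 ≤ c)
      (hC : ∀ i j, |C i j| ≤ c) : ‖C.euclideanRows‖ ≤ √(k + 1 : ℕ) * c :=
    (pi_norm_le_iff_of_nonneg (by positivity)).2 fun i => by
      simpa using EuclideanSpace.norm_le_sqrt_card_mul (v := C.euclideanRows i) (hC i)
  calc |A.det - B.det|
      ≤ (k + 1 : ℕ) * max ‖A.euclideanRows‖ ‖B.euclideanRows‖ ^ k *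
        ‖A.euclideanRows - B.euclideanRows‖ := abs_det_sub_det_le_norm_euclideanRows A B
    _ ≤ (k + 1 : ℕ) * (√(k + 1 : ℕ) * M) ^ k * (√(k + 1 : ℕ) * δ) := by
      gcongr
      · exact max_le (hrows hM hA) (hrows hM hB)
      · exact hrows (C := A - B) hδ hAB
    _ = (k + 1 : ℕ) * √(k + 1 : ℕ) ^ (k + 1) * M ^ k * δ := by ring

end Matrix

lemma sq_sqrt_pow_mul_pow_div_factorial_le (a : ℝ) (m : ℕ) :
    (√m ^ m * a ^ m / m.factorial) ^ 2 ≤ (Real.exp 1 * a ^ 2) ^ m / m.factorial := by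
  have hm : (m : ℝ) ^ m / m.factorial ≤ Real.exp 1 ^ m := by
    simpa [← Real.exp_nat_mul] using
      Real.pow_div_factorial_le_exp (x := m) (hx := Nat.cast_nonneg m) (n := m)
  have hsqrt : (√m ^ m) ^ 2 = (m : ℝ) ^ m := by
    rw [← pow_mul, mul_comm, pow_mul, Real.sq_sqrt (Nat.cast_nonneg m)]
  calc (√m ^ m * a ^ m / m.factorial) ^ 2
      = (m : ℝ) ^ m / m.factorial * (a ^ 2) ^ m / m.factorial := by
        rw [div_pow, mul_pow, hsqrt]; ring
    _ ≤ Real.exp 1 ^ m * (a ^ 2) ^ m / m.factorial := by gcongr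
    _ = (Real.exp 1 * a ^ 2) ^ m / m.factorial := by rw [mul_pow]

lemma summable_sqrt_pow_mul_pow_div_factorial (a : ℝ) :
    Summable fun m : ℕ => √m ^ m * a ^ m / m.factorial := by
  -- `|t| ≤ (4 ^ m t ^ 2 + 4⁻¹ ^ m) / 2`, and `4 ^ m t ^ 2` is dominated by an exponential series
  refine Summable.of_norm_bounded
    (((Real.summable_pow_div_factorial (4 * Real.exp 1 * a ^ 2)).add
      (summable_geometric_of_lt_one (by norm_num) (by norm_num : (4 : ℝ)⁻¹ < 1))).div_const 2)
    fun m => ?_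
  set t := √m ^ m * a ^ m / m.factorial
  have hsq : 4 ^ m * t ^ 2 ≤ (4 * Real.exp 1 * a ^ 2) ^ m / m.factorial := by
    calc 4 ^ m * t ^ 2 ≤ 4 ^ m * ((Real.exp 1 * a ^ 2) ^ m / m.factorial) := by
          gcongr; exact sq_sqrt_pow_mul_pow_div_factorial_le a m
      _ = (4 * Real.exp 1 * a ^ 2) ^ m / m.factorial := by
          rw [mul_assoc 4, mul_pow 4, mul_div_assoc]
  have hamgm := two_mul_le_add_sq (2 ^ m * |t|) ((2 : ℝ)⁻¹ ^ m)
  have h4 : (2 ^ m * |t|) ^ 2 = 4 ^ m * t ^ 2 := by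
    rw [mul_pow, sq_abs, ← pow_mul, mul_comm m 2, pow_mul]; norm_num
  have h4' : ((2 : ℝ)⁻¹ ^ m) ^ 2 = 4⁻¹ ^ m := by
    rw [← pow_mul, mul_comm m 2, pow_mul]; norm_num
  have h1 : 2 * (2 ^ m * |t|) * (2 : ℝ)⁻¹ ^ m = 2 * |t| := by
    rw [inv_pow, mul_assoc, mul_comm (2 ^ m : ℝ), mul_assoc, mul_inv_cancel₀ (by positivity),
      mul_one]
  rw [Real.norm_eq_abs]
  linarith

lemma summable_natCast_mul_sqrt_pow_mul_pow_pred_div_factorial (a b : ℝ) :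
    Summable fun m : ℕ => m * √m ^ m * a ^ (m - 1) * b ^ m / m.factorial := by
  refine Summable.of_norm_bounded
    (summable_sqrt_pow_mul_pow_div_factorial (2 * (|a| + 1) * |b|)) fun m => ?_
  have hm : (m : ℝ) ≤ 2 ^ m := by exact_mod_cast Nat.lt_two_pow_self.le
  have ha : |a| ^ (m - 1) ≤ (|a| + 1) ^ m :=
    (pow_le_pow_left₀ (abs_nonneg a) (by linarith) _).trans
      (pow_le_pow_right₀ (by linarith [abs_nonneg a]) (Nat.sub_le m 1))
  simp only [Real.norm_eq_abs, abs_div, abs_mul, abs_pow, Nat.abs_cast,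
    abs_of_nonneg (Real.sqrt_nonneg (m : ℝ))]
  gcongr ?_ / _
  calc (m : ℝ) * √m ^ m * |a| ^ (m - 1) * |b| ^ m
      ≤ 2 ^ m * √m ^ m * (|a| + 1) ^ m * |b| ^ m := by gcongr
    _ = √m ^ m * (2 * (|a| + 1) * |b|) ^ m := by rw [mul_pow, mul_pow]; ring

lemma abs_neg_one_pow_div_factorial_mul (m : ℕ) (a : ℝ) :
    |(-1 : ℝ) ^ m / m.factorial * a| = |a| / m.factorial := by
  rw [abs_mul, abs_div, abs_pow, abs_neg, abs_one, one_pow, Nat.abs_cast, one_div_mul_eq_div]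

section Kernel

variable {X : Type*} [MeasurableSpace X] (ν : Measure X) {K L : X → X → ℝ} {M : ℝ}

noncomputable def fredholmIntegral (K : X → X → ℝ) (m : ℕ) : ℝ :=
  ∫ x : Fin m → X, (Matrix.of fun i j => K (x i) (x j)).det ∂(Measure.pi fun _ => ν)

lemma fredholmDet_eq_tsum :
    fredholmDet ν K = ∑' m : ℕ, (-1 : ℝ) ^ m / m.factorial * fredholmIntegral ν K m :=
  rfl

lemma measurable_det_kernel (hK : Measurable (Function.uncurry K)) (m : ℕ) :
    Measurable fun x : Fin m → X => (Matrix.of fun i j => K (x i) (x j)).det := by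
  simp only [Matrix.det_apply, Matrix.of_apply]
  fun_prop

variable [IsFiniteMeasure ν]

lemma measureReal_pi_univ (m : ℕ) :
    (Measure.pi fun _ : Fin m => ν).real Set.univ = ν.real Set.univ ^ m := by
  simp [measureReal_def, Measure.pi_univ, ENNReal.toReal_pow]

lemma abs_fredholmIntegral_le (hKb : ∀ x y, |K x y| ≤ M) (m : ℕ) :
    |fredholmIntegral ν K m| ≤ √m ^ m * M ^ m * ν.real Set.univ ^ m := by
  rw [← Real.norm_eq_abs, ← measureReal_pi_univ]
  exact norm_integral_le_of_norm_le_const <| .of_forall fun _ =>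
    Matrix.abs_det_le_of_abs_le fun _ _ => hKb _ _

lemma integrable_det_kernel (hK : Measurable (Function.uncurry K)) (hKb : ∀ x y, |K x y| ≤ M)
    (m : ℕ) :
    Integrable (fun x : Fin m → X => (Matrix.of fun i j => K (x i) (x j)).det)
      (Measure.pi fun _ => ν) :=
  .of_bound (measurable_det_kernel hK m).aestronglyMeasurable _
    (.of_forall fun _ => Matrix.abs_det_le_of_abs_le fun _ _ => hKb _ _)

lemma abs_fredholmIntegral_sub_le (hK : Measurable (Function.uncurry K))
    (hL : Measurable (Function.uncurry L)) (hKb : ∀ x y, |K x y| ≤ M)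
    (hLb : ∀ x y, |L x y| ≤ M) {δ : ℝ} (hKL : ∀ x y, |K x y - L x y| ≤ δ) (m : ℕ) :
    |fredholmIntegral ν K m - fredholmIntegral ν L m|
      ≤ m * √m ^ m * M ^ (m - 1) * δ * ν.real Set.univ ^ m := by
  rw [fredholmIntegral, fredholmIntegral, ← integral_sub (integrable_det_kernel ν hK hKb m)
    (integrable_det_kernel ν hL hLb m), ← Real.norm_eq_abs, ← measureReal_pi_univ]
  exact norm_integral_le_of_norm_le_const <| .of_forall fun _ =>
    Matrix.abs_det_sub_det_le_of_abs_le (fun _ _ => hKb _ _) (fun _ _ => hLb _ _)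
      fun _ _ => hKL _ _

lemma summable_fredholmDet_series (hKb : ∀ x y, |K x y| ≤ M) :
    Summable fun m : ℕ => (-1 : ℝ) ^ m / m.factorial * fredholmIntegral ν K m := by
  refine .of_norm_bounded (summable_sqrt_pow_mul_pow_div_factorial (M * ν.real Set.univ))
    fun m => ?_
  rw [Real.norm_eq_abs, abs_neg_one_pow_div_factorial_mul, mul_pow, ← mul_assoc]
  gcongr
  exact abs_fredholmIntegral_le ν hKb m

end Kernel

theorem fredholmDet_lipschitz_general {X : Type*} [MeasurableSpace X] (ν : Measure X)
    [IsFiniteMeasure ν] (M : ℝ) :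
    ∃ c : ℝ, ∀ K L : X → X → ℝ,
      Measurable (Function.uncurry K) → Measurable (Function.uncurry L) →
      (∀ x y, |K x y| ≤ M) → (∀ x y, |L x y| ≤ M) →
      ∀ δ : ℝ, (∀ x y, |K x y - L x y| ≤ δ) →
      |fredholmDet ν K - fredholmDet ν L| ≤ c * δ := by
  set r := ν.real Set.univ
  set d : ℕ → ℝ := fun m => m * √m ^ m * M ^ (m - 1) * r ^ m / m.factorial
  refine ⟨∑' m, d m, fun K L hK hL hKb hLb δ hKL => ?_⟩
  have hterm (m : ℕ) : |(-1 : ℝ) ^ m / m.factorial * fredholmIntegral ν K m -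
      (-1 : ℝ) ^ m / m.factorial * fredholmIntegral ν L m| ≤ d m * δ := by
    rw [← mul_sub, abs_neg_one_pow_div_factorial_mul]
    calc _ ≤ m * √m ^ m * M ^ (m - 1) * δ * r ^ m / m.factorial := by
          gcongr; exact abs_fredholmIntegral_sub_le ν hK hL hKb hLb hKL m
      _ = d m * δ := by ring
  rw [fredholmDet_eq_tsum, fredholmDet_eq_tsum, ← (summable_fredholmDet_series ν hKb).tsum_sub
    (summable_fredholmDet_series ν hLb), ← Real.norm_eq_abs]
  exact tsum_of_norm_bounded
    ((summable_natCast_mul_sqrt_pow_mul_pow_pred_div_factorial M r).hasSum.mul_right δ) hterm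

/-- Local Lipschitz continuity of the Fredholm determinant with respect to uniform
convergence of kernels on a finite measure space: for bounded measurable kernels
`K, L` with `‖K‖_∞, ‖L‖_∞ ≤ M`,
`|det(I-K) - det(I-L)| ≤ c(M, ν(X)) · ‖K - L‖_∞`
for a constant depending only on `M` and `ν(X)`. -/
theorem fredholmDet_lipschitz {X : Type*} [MeasurableSpace X] (ν : Measure X)
    [IsFiniteMeasure ν] (M : ℝ) (hM : 0 ≤ M) :
    ∃ c : ℝ, ∀ K L : X → X → ℝ,
      Measurable (Function.uncurry K) → Measurable (Function.uncurry L) →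
      (∀ x y, |K x y| ≤ M) → (∀ x y, |L x y| ≤ M) →
      ∀ δ : ℝ, (∀ x y, |K x y - L x y| ≤ δ) →
      |fredholmDet ν K - fredholmDet ν L| ≤ c * δ :=
  fredholmDet_lipschitz_general ν M
end
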